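/- For every z ∈ ℍ one has Σ_{s=0}^{p−1} (f∣ₖW)((z+s)/p) = p^k · χ(p mod M) · f(z). (Equivalently, f is an eigenfunction with eigenvalue p of the operator Q_p = \bar{χ}(p)·p^{1−k/2}·U_p·W_p of the paper.) -/

import Mathlib

open UpperHalfPlane ModularForm
open scoped MatrixGroups ModularForm

/-- The point `(z+t)/c` of the upper half-plane (`c > 0`, `t` real). -/
noncomputable def shiftDivH (c : ℝ) (hc : 0 < c) (t : ℝ) (z : ℍ) : ℍ :=
  ⟨((z : ℂ) + (t : ℂ)) / (c : ℂ), by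
    have hz := z.2
    rw [Complex.div_im]
    simp only [Complex.add_im, Complex.ofReal_im, Complex.ofReal_re, Complex.add_re,
      Complex.normSq_ofReal, add_zero, zero_mul, mul_zero, sub_zero, zero_div]
    positivity⟩

/-! With `A_t = (1, t; 0, c)` one has `A_t • z = (z + t)/c` and `f ∣ₖ A_t = c⁻¹ · f ∘ A_t`.
The key identity is `W · A_s = p · γ_s` with `γ_s = (β, βs + 1; Mγ₀, Mγ₀s + p) ∈ Γ₀(M)`, whose
lower-right entry is `≡ p (mod M)`. The scalar `p` acts by `p^(k-2)` and `γ_s` by `χ(p)`, so every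
summand equals `p^(k-1) χ(p) f(z)`. -/

noncomputable def shiftDivGL (c : ℝ) (hc : 0 < c) (t : ℝ) : GL (Fin 2) ℝ :=
  .mkOfDetNeZero !![1, t; 0, c] (by simp [Matrix.det_fin_two_of, hc.ne'])

section shiftDiv

variable {c : ℝ} (hc : 0 < c) (t : ℝ)

lemma det_shiftDivGL : (shiftDivGL c hc t).det.val = c := by
  simp [shiftDivGL, Matrix.det_fin_two_of]

lemma denom_shiftDivGL (z : ℂ) : denom (shiftDivGL c hc t) z = c := by
  simp [denom, shiftDivGL]

lemma shiftDivGL_smul (z : ℍ) : shiftDivGL c hc t • z = shiftDivH c hc t z := by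
  ext1
  rw [coe_smul_of_det_pos (by rw [det_shiftDivGL]; exact hc), denom_shiftDivGL]
  simp [num, shiftDivGL, shiftDivH]

lemma slash_shiftDivGL_apply (k : ℤ) (f : ℍ → ℂ) (z : ℍ) :
    (f ∣[k] shiftDivGL c hc t) z = (c : ℂ)⁻¹ * f (shiftDivH c hc t z) := by
  have hc' : (c : ℂ) ≠ 0 := by exact_mod_cast hc.ne'
  rw [slash_apply, shiftDivGL_smul, denom_shiftDivGL, det_shiftDivGL, abs_of_pos hc, σ,
    if_pos (by rw [det_shiftDivGL]; exact hc), ContinuousAlgEquiv.refl_apply, zpow_sub_one₀ hc',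
    zpow_neg]
  field_simp

end shiftDiv

lemma slash_scalar (k : ℤ) (f : ℍ → ℂ) (u : ℝˣ) :
    f ∣[k] Matrix.GeneralLinearGroup.scalar (Fin 2) u = ((u : ℝ) : ℂ) ^ (k - 2) • f := by
  ext z
  have hu : ((u : ℝ) : ℂ) ≠ 0 := by exact_mod_cast u.ne_zero
  have hdet : (Matrix.GeneralLinearGroup.scalar (Fin 2) u).det.val = (u : ℝ) ^ 2 := by
    simp [sq]
  rw [slash_apply, glScalar_smul, denom_scalar, hdet, σ,
    if_pos (by rw [hdet]; exact sq_pos_of_ne_zero u.ne_zero), abs_of_nonneg (sq_nonneg _)]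
  simp only [ContinuousAlgEquiv.refl_apply, Pi.smul_apply, smul_eq_mul]
  push_cast
  rw [← zpow_natCast, ← zpow_mul, mul_assoc, ← zpow_add₀ hu]
  ring_nf

lemma slash_apply_shiftDivH_of_mul_eq {c : ℝ} (hc : 0 < c) (t : ℝ) (k : ℤ) (f : ℍ → ℂ)
    {g γ : GL (Fin 2) ℝ}
    (h : g * shiftDivGL c hc t = Matrix.GeneralLinearGroup.scalar (Fin 2) (.mk0 c hc.ne') * γ)
    (z : ℍ) : (f ∣[k] g) (shiftDivH c hc t z) = (c : ℂ) ^ (k - 1) * (f ∣[k] γ) z := by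
  have hc' : (c : ℂ) ≠ 0 := by exact_mod_cast hc.ne'
  have := congrFun (congrArg (f ∣[k] ·) h) z
  simp only [SlashAction.slash_mul, slash_shiftDivGL_apply, slash_scalar, smul_slash,
    map_zpow₀, σ_ofReal, Units.val_mk0, Pi.smul_apply, smul_eq_mul] at this
  rw [show k - 1 = k - 2 + 1 by ring, zpow_add_one₀ hc', mul_right_comm, ← this]
  field_simp

section Gamma0

variable {p M : ℕ} {β γ₀ : ℤ}

def gamma0OfWShift (hβ : (p : ℤ) * β - M * γ₀ = 1) (s : ℤ) : SL(2, ℤ) :=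
  ⟨!![β, β * s + 1; M * γ₀, M * γ₀ * s + p], by
    rw [Matrix.det_fin_two_of]; linear_combination hβ⟩

variable (hβ : (p : ℤ) * β - M * γ₀ = 1) (s : ℤ)

lemma gamma0OfWShift_mem_Gamma0 : gamma0OfWShift hβ s ∈ CongruenceSubgroup.Gamma0 M := by
  rw [CongruenceSubgroup.Gamma0_mem]
  simp [gamma0OfWShift]

lemma gamma0OfWShift_one_one : ((gamma0OfWShift hβ s 1 1 : ℤ) : ZMod M) = p := by
  simp [gamma0OfWShift]

lemma mul_shiftDivGL_eq_scalar_mul {W : GL (Fin 2) ℝ} (hW : (W : Matrix (Fin 2) (Fin 2) ℝ) =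
      !![(p : ℝ) * β, 1; (p : ℝ) * M * γ₀, (p : ℝ)]) (hp : (0 : ℝ) < p) :
    W * shiftDivGL p hp s = Matrix.GeneralLinearGroup.scalar (Fin 2) (.mk0 (p : ℝ) hp.ne') *
      (gamma0OfWShift hβ s : GL (Fin 2) ℝ) := by
  ext i j
  simp only [Matrix.GeneralLinearGroup.coe_mul, Matrix.SpecialLinearGroup.coe_GL_coe_matrix,
    Matrix.SpecialLinearGroup.coe_matrix_coe, hW, shiftDivGL]
  fin_cases i <;> fin_cases j <;>
    simp [gamma0OfWShift, Matrix.mul_apply, Fin.sum_univ_two, Matrix.natCast_apply] <;> ring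

end Gamma0

/-- With `W = (pβ, 1; pMγ₀, p)` (of determinant `p`, where `pβ − Mγ₀ = 1`) and `f` of
weight `k`, character `χ` and level `Γ₀(M)`:
`Σ_{s=0}^{p−1} (f∣ₖW)((z+s)/p) = p^k·χ(p)·f(z)` for all `z ∈ ℍ`. -/
theorem stmt19 (p M : ℕ) (hp : p.Prime) (k : ℤ)
    (χ : DirichletCharacter ℂ M) (f : ℍ → ℂ)
    (hf : ∀ γ : SL(2, ℤ), γ ∈ CongruenceSubgroup.Gamma0 M →
      f ∣[k] γ = χ (((γ : Matrix (Fin 2) (Fin 2) ℤ) 1 1 : ℤ) : ZMod M) • f)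
    (β γ₀ : ℤ) (hβ : (p : ℤ) * β - (M : ℤ) * γ₀ = 1)
    (W : GL(2, ℝ)⁺)
    (hW : ((W : GL (Fin 2) ℝ) : Matrix (Fin 2) (Fin 2) ℝ) =
      !![(p : ℝ) * β, 1; (p : ℝ) * M * γ₀, (p : ℝ)]) :
    ∀ z : ℍ, ∑ s ∈ Finset.range p,
        (f ∣[k] (W : GL (Fin 2) ℝ)) (shiftDivH p (by exact_mod_cast hp.pos) s z) =
      (p : ℂ) ^ k * χ ((p : ℕ) : ZMod M) * f z := by
  intro z
  have hp0 : (0 : ℝ) < p := by exact_mod_cast hp.pos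
  have hterm (s : ℕ) : (f ∣[k] (W : GL (Fin 2) ℝ)) (shiftDivH p hp0 s z) =
      (p : ℂ) ^ (k - 1) * (χ p * f z) := by
    have hγ := congrFun (hf _ (gamma0OfWShift_mem_Gamma0 hβ s)) z
    rw [gamma0OfWShift_one_one, SL_slash] at hγ
    rw [← Int.cast_natCast s, slash_apply_shiftDivH_of_mul_eq hp0 _ k f
      (mul_shiftDivGL_eq_scalar_mul hβ s hW hp0), hγ, Pi.smul_apply, smul_eq_mul,
      Complex.ofReal_natCast]
  rw [Finset.sum_congr rfl fun s _ => hterm s, Finset.sum_const, Finset.card_range, nsmul_eq_mul,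
    ← mul_assoc, ← zpow_one_add₀ (by exact_mod_cast hp.ne_zero), add_sub_cancel, mul_assoc]
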